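/- arXiv:2507.09841 — 6 statements merged into one kernel-verified Lean document; each statement's English description precedes it below -/
import Mathlib

section
/- If U_A is an (α, a, δ)-block encoding of an s-qubit operator A and U_B is a (β, b, ε)-block encoding of an s-qubit operator B, then there exists an (α+β, max(a,b)+1, δ+ε)-block encoding of A+B. -/
open Matrix
open scoped Matrix.Norms.L2Operator

noncomputable section

/-- `U` is an `(α, ε)`-block encoding of the operator `A` on the system register indexed by `κ`,
with ancilla register indexed by `ι` and distinguished all-zeros ancilla state `z`:
`U` is unitary and `‖A - α • (⟨z| ⊗ I) U (|z⟩ ⊗ I)‖ ≤ ε` in the `ℓ²` operator norm. -/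
def IsBlockEncoding {ι κ : Type*} [Fintype ι] [Fintype κ] [DecidableEq ι] [DecidableEq κ]
    (z : ι) (α ε : ℝ) (U : Matrix (ι × κ) (ι × κ) ℂ) (A : Matrix κ κ ℂ) : Prop :=
  U ∈ Matrix.unitaryGroup (ι × κ) ℂ ∧
    ‖A - α • Matrix.of (fun i j => U (z, i) (z, j))‖ ≤ ε

open scoped Kronecker

section Aux

lemma kron_conjT {m n : Type*} (A : Matrix m m ℂ) (B : Matrix n n ℂ) :
    (A ⊗ₖ B)ᴴ = Aᴴ ⊗ₖ Bᴴ := by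
  ext ⟨i, j⟩ ⟨k, l⟩
  simp [Matrix.conjTranspose_apply, Matrix.kroneckerMap_apply, star_mul', mul_comm]

lemma kron_unitary {m n : Type*} [Fintype m] [Fintype n] [DecidableEq m] [DecidableEq n]
    {A : Matrix m m ℂ} {B : Matrix n n ℂ} (hA : A ∈ Matrix.unitaryGroup m ℂ)
    (hB : B ∈ Matrix.unitaryGroup n ℂ) : A ⊗ₖ B ∈ Matrix.unitaryGroup (m × n) ℂ := by
  rw [Matrix.mem_unitaryGroup_iff, Matrix.star_eq_conjTranspose] at *
  rw [kron_conjT, ← Matrix.mul_kronecker_mul, hA, hB, Matrix.one_kronecker_one]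

lemma reindex_unitary {m n : Type*} [Fintype m] [Fintype n] [DecidableEq m] [DecidableEq n]
    (e : m ≃ n) {M : Matrix m m ℂ} (h : M ∈ Matrix.unitaryGroup m ℂ) :
    Matrix.reindex e e M ∈ Matrix.unitaryGroup n ℂ := by
  rw [Matrix.mem_unitaryGroup_iff, Matrix.star_eq_conjTranspose] at *
  rw [Matrix.reindex_apply, Matrix.conjTranspose_submatrix, Matrix.submatrix_mul_equiv, h,
    Matrix.submatrix_one_equiv]

lemma blockDiag_unitary {o m : Type*} [Fintype o] [DecidableEq o] [Fintype m] [DecidableEq m]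
    (f : o → Matrix m m ℂ) (h : ∀ c, f c ∈ Matrix.unitaryGroup m ℂ) :
    Matrix.blockDiagonal f ∈ Matrix.unitaryGroup (m × o) ℂ := by
  rw [Matrix.mem_unitaryGroup_iff, Matrix.star_eq_conjTranspose]
  rw [Matrix.blockDiagonal_conjTranspose, ← Matrix.blockDiagonal_mul]
  rw [show (fun k => f k * (f k)ᴴ) = fun _ => (1 : Matrix m m ℂ) from
    funext fun c => by
      rw [← Matrix.star_eq_conjTranspose]; exact Matrix.mem_unitaryGroup_iff.mp (h c)]
  exact Matrix.blockDiagonal_one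

/-- Split a register of `m` qubits into the first `a` and the remaining `m - a`. -/
def eSplit (a m : ℕ) (h : a ≤ m) : (Fin m → Fin 2) ≃ (Fin a → Fin 2) × (Fin (m - a) → Fin 2) :=
  ((Equiv.arrowCongr (finCongr (Nat.add_sub_cancel' h)).symm (Equiv.refl (Fin 2)))).trans
    ((Equiv.arrowCongr finSumFinEquiv.symm (Equiv.refl (Fin 2))).trans
      (Equiv.sumArrowEquivProdArrow _ _ _))

/-- Split off the distinguished first ancilla qubit. -/
def eAnc (m s : ℕ) : ((Fin (m + 1) → Fin 2) × (Fin s → Fin 2)) ≃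
    (((Fin m → Fin 2) × (Fin s → Fin 2)) × Fin 2) where
  toFun := fun p => ((Fin.tail p.1, p.2), p.1 0)
  invFun := fun p => (Fin.cons p.2 p.1.1, p.1.2)
  left_inv := fun p => by simp [Fin.cons_self_tail]
  right_inv := fun p => by simp

/-- Regroup `(ancilla_m × system)` as `((ancilla_a × system) × ancilla_(m-a))`. -/
def ePad (a m s : ℕ) (h : a ≤ m) :
    ((Fin m → Fin 2) × (Fin s → Fin 2)) ≃
      (((Fin a → Fin 2) × (Fin s → Fin 2)) × (Fin (m - a) → Fin 2)) where
  toFun := fun p => (((eSplit a m h p.1).1, p.2), (eSplit a m h p.1).2)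
  invFun := fun p => ((eSplit a m h).symm (p.1.1, p.2), p.1.2)
  left_inv := fun p => by simp
  right_inv := fun p => by simp

/-- Pad a block encoding with extra (inert) ancilla qubits, up to `m` ancillas. -/
def padU (a m s : ℕ) (h : a ≤ m)
    (U : Matrix ((Fin a → Fin 2) × (Fin s → Fin 2)) ((Fin a → Fin 2) × (Fin s → Fin 2)) ℂ) :
    Matrix ((Fin m → Fin 2) × (Fin s → Fin 2)) ((Fin m → Fin 2) × (Fin s → Fin 2)) ℂ :=
  Matrix.reindex (ePad a m s h).symm (ePad a m s h).symm (U ⊗ₖ (1 : Matrix (Fin (m - a) → Fin 2) (Fin (m - a) → Fin 2) ℂ))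

lemma padU_unitary (a m s : ℕ) (h : a ≤ m)
    {U : Matrix ((Fin a → Fin 2) × (Fin s → Fin 2)) ((Fin a → Fin 2) × (Fin s → Fin 2)) ℂ}
    (hU : U ∈ Matrix.unitaryGroup _ ℂ) : padU a m s h U ∈ Matrix.unitaryGroup _ ℂ :=
  reindex_unitary _ (kron_unitary hU (one_mem _))

lemma padU_zero_apply (a m s : ℕ) (h : a ≤ m)
    (U : Matrix ((Fin a → Fin 2) × (Fin s → Fin 2)) ((Fin a → Fin 2) × (Fin s → Fin 2)) ℂ)
    (i j : Fin s → Fin 2) :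
    padU a m s h U ((fun _ => 0), i) ((fun _ => 0), j) = U ((fun _ => 0), i) ((fun _ => 0), j) := by
  have e1 : ePad a m s h ((fun _ => 0), i) = (((fun _ => 0), i), (fun _ => 0)) := rfl
  have e2 : ePad a m s h ((fun _ => 0), j) = (((fun _ => 0), j), (fun _ => 0)) := rfl
  simp [padU, Matrix.reindex_apply, Matrix.submatrix_apply, e1, e2,
    Matrix.kroneckerMap_apply, Matrix.one_apply]

/-- The state-preparation unitary for the LCU combination. -/
def Vmat (α β : ℝ) : Matrix (Fin 2) (Fin 2) ℂ :=
  !![(Real.sqrt (α / (α + β)) : ℂ), (Real.sqrt (β / (α + β)) : ℂ);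
     (Real.sqrt (β / (α + β)) : ℂ), -(Real.sqrt (α / (α + β)) : ℂ)]

lemma vmat_aux (x y : ℝ) (h : x ^ 2 + y ^ 2 = 1) :
    !![(x:ℂ), (y:ℂ); (y:ℂ), -(x:ℂ)] * !![(x:ℂ), (y:ℂ); (y:ℂ), -(x:ℂ)]ᴴ = 1 := by
  ext i j
  fin_cases i <;> fin_cases j <;>
    simp [Matrix.mul_apply, Fin.sum_univ_two, Matrix.conjTranspose_apply, Matrix.one_apply] <;>
    norm_cast <;> linarith [h]

lemma Vmat_unitary (α β : ℝ) (hα : 0 < α) (hβ : 0 < β) :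
    Vmat α β ∈ Matrix.unitaryGroup (Fin 2) ℂ := by
  have hab : (0:ℝ) < α + β := by linarith
  have h1 : Real.sqrt (α / (α + β)) ^ 2 + Real.sqrt (β / (α + β)) ^ 2 = 1 := by
    rw [Real.sq_sqrt (by positivity), Real.sq_sqrt (by positivity),
      ← add_div, div_self hab.ne']
  rw [Matrix.mem_unitaryGroup_iff, Matrix.star_eq_conjTranspose]
  exact vmat_aux _ _ h1

lemma corner {Q : Type*} [Fintype Q] [DecidableEq Q] (V : Matrix (Fin 2) (Fin 2) ℂ)
    (f : Fin 2 → Matrix Q Q ℂ) (p q : Q) (c0 : Fin 2) :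
    (((1 : Matrix Q Q ℂ) ⊗ₖ V) * Matrix.blockDiagonal f * ((1 : Matrix Q Q ℂ) ⊗ₖ V))
      (p, c0) (q, c0) = ∑ c : Fin 2, V c0 c * f c p q * V c c0 := by
  simp [Matrix.mul_apply, Fintype.sum_prod_type, Matrix.kroneckerMap_apply,
    Matrix.blockDiagonal_apply, Matrix.one_apply, Finset.mul_sum, Finset.sum_mul,
    ite_mul, mul_ite, mul_zero, zero_mul, Finset.sum_ite_eq, Finset.sum_ite_eq']

end Aux

/-- Addition of block-encoded matrices: if `U_A` is an `(α, a, δ)`-block encoding of the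
`s`-qubit operator `A` and `U_B` is a `(β, b, ε)`-block encoding of the `s`-qubit operator `B`,
then there exists an `(α + β, max a b + 1, δ + ε)`-block encoding of `A + B`. -/
theorem blockEncoding_add (s a b : ℕ) (α β δ ε : ℝ) (hα : 0 < α) (hβ : 0 < β)
    (A B : Matrix (Fin s → Fin 2) (Fin s → Fin 2) ℂ)
    (UA : Matrix ((Fin a → Fin 2) × (Fin s → Fin 2)) ((Fin a → Fin 2) × (Fin s → Fin 2)) ℂ)
    (UB : Matrix ((Fin b → Fin 2) × (Fin s → Fin 2)) ((Fin b → Fin 2) × (Fin s → Fin 2)) ℂ)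
    (hA : IsBlockEncoding (fun _ => 0) α δ UA A)
    (hB : IsBlockEncoding (fun _ => 0) β ε UB B) :
    ∃ W : Matrix ((Fin (max a b + 1) → Fin 2) × (Fin s → Fin 2))
        ((Fin (max a b + 1) → Fin 2) × (Fin s → Fin 2)) ℂ,
      IsBlockEncoding (fun _ => 0) (α + β) (δ + ε) W (A + B) := by
  have hab : (0:ℝ) < α + β := by linarith
  set m := max a b with hm
  have ha : a ≤ m := le_max_left a b
  have hb : b ≤ m := le_max_right a b
  set Q := (Fin m → Fin 2) × (Fin s → Fin 2) with hQ
  set f : Fin 2 → Matrix Q Q ℂ :=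
    fun c => if c = 0 then padU a m s ha UA else padU b m s hb UB with hf
  set VI : Matrix (Q × Fin 2) (Q × Fin 2) ℂ := (1 : Matrix Q Q ℂ) ⊗ₖ Vmat α β with hVI
  set M : Matrix (Q × Fin 2) (Q × Fin 2) ℂ := VI * Matrix.blockDiagonal f * VI with hM
  refine ⟨Matrix.reindex (eAnc m s).symm (eAnc m s).symm M, ?_, ?_⟩
  · -- unitarity
    apply reindex_unitary
    have hVIu : VI ∈ Matrix.unitaryGroup (Q × Fin 2) ℂ :=
      kron_unitary (one_mem _) (Vmat_unitary α β hα hβ)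
    have hDu : Matrix.blockDiagonal f ∈ Matrix.unitaryGroup (Q × Fin 2) ℂ := by
      apply blockDiag_unitary
      intro c
      by_cases hc : c = 0 <;> simp only [hf, hc, if_true, if_false, reduceIte]
      · exact padU_unitary a m s ha hA.1
      · exact padU_unitary b m s hb hB.1
    exact mul_mem (mul_mem hVIu hDu) hVIu
  · -- norm bound
    have key : ∀ i j : Fin s → Fin 2,
        (Matrix.reindex (eAnc m s).symm (eAnc m s).symm M) ((fun _ => 0), i) ((fun _ => 0), j) =
          ((α / (α + β) : ℝ) : ℂ) * UA ((fun _ => 0), i) ((fun _ => 0), j) +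
          ((β / (α + β) : ℝ) : ℂ) * UB ((fun _ => 0), i) ((fun _ => 0), j) := by
      intro i j
      have eza : eAnc m s ((fun _ => 0), i) = (((fun _ => 0), i), 0) := rfl
      have ezb : eAnc m s ((fun _ => 0), j) = (((fun _ => 0), j), 0) := rfl
      rw [Matrix.reindex_apply, Matrix.submatrix_apply, Equiv.symm_symm, eza, ezb, hM, corner]
      rw [Fin.sum_univ_two]
      simp only [hf, if_true, reduceIte, Fin.isValue, one_ne_zero]
      rw [padU_zero_apply, padU_zero_apply]
      have v00 : Vmat α β 0 0 = (Real.sqrt (α / (α + β)) : ℂ) := by simp [Vmat]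
      have v01 : Vmat α β 0 1 = (Real.sqrt (β / (α + β)) : ℂ) := by simp [Vmat]
      have v10 : Vmat α β 1 0 = (Real.sqrt (β / (α + β)) : ℂ) := by simp [Vmat]
      rw [v00, v01, v10]
      have sq1 : (Real.sqrt (α / (α + β)) : ℂ) * (Real.sqrt (α / (α + β)) : ℂ) =
          ((α / (α + β) : ℝ) : ℂ) := by
        rw [← Complex.ofReal_mul, Real.mul_self_sqrt (by positivity)]
      have sq2 : (Real.sqrt (β / (α + β)) : ℂ) * (Real.sqrt (β / (α + β)) : ℂ) =
          ((β / (α + β) : ℝ) : ℂ) := by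
        rw [← Complex.ofReal_mul, Real.mul_self_sqrt (by positivity)]
      linear_combination UA ((fun _ => 0), i) ((fun _ => 0), j) * sq1 +
        UB ((fun _ => 0), i) ((fun _ => 0), j) * sq2
    have blockeq : (α + β) • Matrix.of (fun i j =>
        (Matrix.reindex (eAnc m s).symm (eAnc m s).symm M) ((fun _ => 0), i) ((fun _ => 0), j)) =
        α • Matrix.of (fun i j => UA ((fun _ => 0), i) ((fun _ => 0), j)) +
        β • Matrix.of (fun i j => UB ((fun _ => 0), i) ((fun _ => 0), j)) := by
      ext i j
      simp only [Matrix.smul_apply, Matrix.add_apply, Matrix.of_apply, key i j]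
      rw [Complex.real_smul, Complex.real_smul, Complex.real_smul]
      push_cast
      have : (α:ℂ) + β ≠ 0 := by
        norm_cast; exact hab.ne'
      field_simp
    rw [blockeq]
    have : A + B - (α • Matrix.of (fun i j => UA ((fun _ => 0), i) ((fun _ => 0), j)) +
        β • Matrix.of (fun i j => UB ((fun _ => 0), i) ((fun _ => 0), j))) =
        (A - α • Matrix.of (fun i j => UA ((fun _ => 0), i) ((fun _ => 0), j))) +
        (B - β • Matrix.of (fun i j => UB ((fun _ => 0), i) ((fun _ => 0), j))) := by abel
    rw [this]
    exact le_trans (norm_add_le _ _) (add_le_add hA.2 hB.2)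
end
end

section
/- For any matrix A ∈ ℂ^{m×n}, the unitary U_A = U_L† U_R with U_L|0^s⟩|j⟩ = (1/‖A‖_F) Σ_i ‖A_{i,·}‖ |i⟩|j⟩ and U_R|i⟩|0^s⟩ = |i⟩ (1/‖A_{i,·}‖) Σ_j A_{ij}|j⟩ satisfies (⟨0^s| ⊗ I) U_A (|0^s⟩ ⊗ I) = A / ‖A‖_F, i.e., U_A is an exact (‖A‖_F, s, 0)-block encoding of A. -/
open Matrix
open scoped Matrix.Norms.L2Operator

noncomputable section

/-- The `ℓ₂`-norm of row `i` of `A`. -/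
def rowNorm {m n : ℕ} (A : Matrix (Fin m) (Fin n) ℂ) (i : Fin m) : ℝ :=
  Real.sqrt (∑ j, ‖A i j‖ ^ 2)

/-- The Frobenius norm of `A`. -/
def frobNorm {m n : ℕ} (A : Matrix (Fin m) (Fin n) ℂ) : ℝ :=
  Real.sqrt (∑ i, ∑ j, ‖A i j‖ ^ 2)

/-- Block encoding via quantum data access: for `A ∈ ℂ^{m×n}` with `m, n ≤ 2^s` and nonzero rows,
if `U_L` and `U_R` are unitaries on `2s` qubits acting on basis states by
`U_L |0^s⟩|j⟩ = (1/‖A‖_F) ∑ᵢ ‖A_{i,·}‖ |i⟩|j⟩` and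
`U_R |i⟩|0^s⟩ = |i⟩ (1/‖A_{i,·}‖) ∑ⱼ A_{ij} |j⟩`,
then the unitary `U_A = U_L† U_R` has the matrix elements of `A / ‖A‖_F` in its
`|0^s⟩`-postselected block, i.e. `⟨0^s, j| U_L† U_R |i, 0^s⟩ = A_{ij} / ‖A‖_F`;
so `U_A` is an exact `(‖A‖_F, s, 0)`-block encoding of `A`. -/
theorem blockEncoding_dataAccess (s m n : ℕ) (hm : m ≤ 2 ^ s) (hn : n ≤ 2 ^ s)
    (A : Matrix (Fin m) (Fin n) ℂ)
    (hrows : ∀ i : Fin m, rowNorm A i ≠ 0)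
    (UL UR : Matrix (Fin (2 ^ s) × Fin (2 ^ s)) (Fin (2 ^ s) × Fin (2 ^ s)) ℂ)
    (hUL : UL ∈ Matrix.unitaryGroup (Fin (2 ^ s) × Fin (2 ^ s)) ℂ)
    (hUR : UR ∈ Matrix.unitaryGroup (Fin (2 ^ s) × Fin (2 ^ s)) ℂ)
    (hULcol : ∀ j : Fin n, ∀ p : Fin (2 ^ s) × Fin (2 ^ s),
      UL p (⟨0, pow_pos (by norm_num) s⟩, Fin.castLE hn j) =
        ∑ i : Fin m, if p = (Fin.castLE hm i, Fin.castLE hn j)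
          then ((rowNorm A i / frobNorm A : ℝ) : ℂ) else 0)
    (hURcol : ∀ i : Fin m, ∀ p : Fin (2 ^ s) × Fin (2 ^ s),
      UR p (Fin.castLE hm i, ⟨0, pow_pos (by norm_num) s⟩) =
        ∑ j : Fin n, if p = (Fin.castLE hm i, Fin.castLE hn j)
          then A i j / ((rowNorm A i : ℝ) : ℂ) else 0) :
    ∀ (i : Fin m) (j : Fin n),
      (ULᴴ * UR) (⟨0, pow_pos (by norm_num) s⟩, Fin.castLE hn j)
          (Fin.castLE hm i, ⟨0, pow_pos (by norm_num) s⟩) =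
        A i j / ((frobNorm A : ℝ) : ℂ) := by

  intro i j
  classical
  have hF : frobNorm A ≠ 0 := by
    intro h
    apply hrows i
    have hnn : (0:ℝ) ≤ ∑ a, ∑ b, ‖A a b‖ ^ 2 :=
      Finset.sum_nonneg fun _ _ => Finset.sum_nonneg fun _ _ => sq_nonneg _
    have hsum : (∑ a, ∑ b, ‖A a b‖ ^ 2) = 0 := by
      have := (Real.sqrt_eq_zero hnn).mp h
      exact this
    have hrow : (∑ b, ‖A i b‖ ^ 2) = 0 := by
      have := (Finset.sum_eq_zero_iff_of_nonneg
        (fun a _ => Finset.sum_nonneg fun b _ => sq_nonneg _)).mp hsum i (Finset.mem_univ i)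
      exact this
    unfold rowNorm
    rw [hrow, Real.sqrt_zero]
  have hr := hrows i
  simp only [Matrix.mul_apply, Matrix.conjTranspose_apply, hULcol, hURcol]
  rw [Finset.sum_eq_single (Fin.castLE hm i, Fin.castLE hn j)]
  · rw [Finset.sum_eq_single i, Finset.sum_eq_single j]
    · simp only [if_pos rfl]
      rw [if_pos trivial, Complex.star_def, Complex.conj_ofReal]
      push_cast
      have hr' : ((rowNorm A i : ℝ) : ℂ) ≠ 0 := Complex.ofReal_ne_zero.mpr hr
      have hF' : ((frobNorm A : ℝ) : ℂ) ≠ 0 := Complex.ofReal_ne_zero.mpr hF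
      field_simp
    · intro b _ hb
      rw [if_neg]
      intro h
      have h2 := congrArg Prod.snd h
      simp only [Prod.snd] at h2
      exact hb (Fin.castLE_injective hn h2.symm)
    · intro h; exact absurd (Finset.mem_univ j) h
    · intro b _ hb
      rw [if_neg]
      intro h
      have h2 := congrArg Prod.fst h
      simp only [Prod.fst] at h2
      exact hb (Fin.castLE_injective hm h2.symm)
    · intro h; exact absurd (Finset.mem_univ i) h
  · intro p _ hp
    by_cases h1 : p.1 = Fin.castLE hm i
    · have h2 : p.2 ≠ Fin.castLE hn j := by
        intro h2; exact hp (Prod.ext h1 h2)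
      have : (∑ i' : Fin m, if p = (Fin.castLE hm i', Fin.castLE hn j)
          then ((rowNorm A i' / frobNorm A : ℝ) : ℂ) else 0) = 0 := by
        apply Finset.sum_eq_zero
        intro b _
        rw [if_neg]
        intro h
        have h3 := congrArg Prod.snd h
        exact h2 h3
      rw [this, star_zero, zero_mul]
    · have : (∑ j' : Fin n, if p = (Fin.castLE hm i, Fin.castLE hn j')
          then A i j' / ((rowNorm A i : ℝ) : ℂ) else 0) = 0 := by
        apply Finset.sum_eq_zero
        intro b _
        rw [if_neg]
        intro h
        have h3 := congrArg Prod.fst h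
        exact h1 h3
      rw [this, mul_zero]
  · intro h; exact absurd (Finset.mem_univ _) h
end
end

section
/- If the block matrix [[M, S],[S^T, N]] is positive semidefinite, N is positive definite, and P is positive semidefinite, then the Riccati update M + A^T P A − (S^T + B^T P A)^T (N + B^T P B)^{-1} (S^T + B^T P A) is positive semidefinite. In particular, the backward Riccati recursion P_k with terminal condition P_T = M_T ⪰ 0 yields P_k ⪰ 0 for all k. -/
open Matrix

noncomputable section

variable {n m : ℕ}

/-- The Riccati update map
`P ↦ M + Aᵀ P A − (Sᵀ + Bᵀ P A)ᵀ (N + Bᵀ P B)⁻¹ (Sᵀ + Bᵀ P A)`. -/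
def riccatiUpdate (A M : Matrix (Fin n) (Fin n) ℝ) (B S : Matrix (Fin n) (Fin m) ℝ)
    (N : Matrix (Fin m) (Fin m) ℝ) (P : Matrix (Fin n) (Fin n) ℝ) : Matrix (Fin n) (Fin n) ℝ :=
  M + Aᵀ * P * A - (Sᵀ + Bᵀ * P * A)ᵀ * (N + Bᵀ * P * B)⁻¹ * (Sᵀ + Bᵀ * P * A)

lemma riccatiUpdate_posSemidef_step (A M : Matrix (Fin n) (Fin n) ℝ)
    (B S : Matrix (Fin n) (Fin m) ℝ) (N : Matrix (Fin m) (Fin m) ℝ)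
    (hblk : (Matrix.fromBlocks M S Sᵀ N).PosSemidef) (hN : N.PosDef)
    (P : Matrix (Fin n) (Fin n) ℝ) (hP : P.PosSemidef) :
    (riccatiUpdate A M B S N P).PosSemidef := by
  have hBPB : (Bᵀ * P * B).PosSemidef := by
    simpa [conjTranspose_eq_transpose_of_trivial] using hP.conjTranspose_mul_mul_same B
  have hN' : (N + Bᵀ * P * B).PosDef := hN.add_posSemidef hBPB
  have : Invertible (N + Bᵀ * P * B) := hN'.isUnit.invertible
  have hPt : Pᵀ = P := by
    simpa [conjTranspose_eq_transpose_of_trivial] using hP.1.eq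
  have hCPC : ((fromCols A B)ᴴ * P * fromCols A B).PosSemidef :=
    hP.conjTranspose_mul_mul_same (fromCols A B)
  have hCPC' : (fromBlocks (Aᵀ * P * A) (Aᵀ * P * B) (Bᵀ * P * A) (Bᵀ * P * B)).PosSemidef := by
    simpa [conjTranspose_eq_transpose_of_trivial, transpose_fromCols, fromRows_mul,
      fromRows_mul_fromCols] using hCPC
  have hbig : (fromBlocks (M + Aᵀ * P * A) (S + Aᵀ * P * B) (Sᵀ + Bᵀ * P * A)
      (N + Bᵀ * P * B)).PosSemidef := by
    have := hblk.add hCPC'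
    simpa [fromBlocks_add] using this
  have hschur := (PosDef.fromBlocks₂₂ (M + Aᵀ * P * A) (S + Aᵀ * P * B) hN').mp ?_
  · have heq : riccatiUpdate A M B S N P =
        (M + Aᵀ * P * A) - (S + Aᵀ * P * B) * (N + Bᵀ * P * B)⁻¹ * (S + Aᵀ * P * B)ᴴ := by
      simp [riccatiUpdate, conjTranspose_eq_transpose_of_trivial, transpose_add,
        transpose_mul, Matrix.mul_assoc, hPt]
    rw [heq]
    exact hschur
  · have hH : (S + Aᵀ * P * B)ᴴ = Sᵀ + Bᵀ * P * A := by
      simp [conjTranspose_eq_transpose_of_trivial, transpose_add, transpose_mul,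
        Matrix.mul_assoc, hPt]
    rw [hH]
    exact hbig

/-- If `[[M, S], [Sᵀ, N]] ⪰ 0`, `N ≻ 0` and `P ⪰ 0`, then the Riccati update of `P` is
positive semidefinite; in particular the backward Riccati recursion with terminal condition
`P_T = M_T ⪰ 0` yields `P_k ⪰ 0` for all `k ≤ T`. -/
theorem riccatiUpdate_posSemidef (A M : Matrix (Fin n) (Fin n) ℝ)
    (B S : Matrix (Fin n) (Fin m) ℝ) (N : Matrix (Fin m) (Fin m) ℝ)
    (hblk : (Matrix.fromBlocks M S Sᵀ N).PosSemidef) (hN : N.PosDef)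
    (T : ℕ) (MT : Matrix (Fin n) (Fin n) ℝ) (hMT : MT.PosSemidef)
    (Pseq : ℕ → Matrix (Fin n) (Fin n) ℝ) (hPT : Pseq T = MT)
    (hrec : ∀ k < T, Pseq k = riccatiUpdate A M B S N (Pseq (k + 1))) :
    (∀ P : Matrix (Fin n) (Fin n) ℝ, P.PosSemidef → (riccatiUpdate A M B S N P).PosSemidef) ∧
      ∀ k ≤ T, (Pseq k).PosSemidef := by
  refine ⟨fun P hP => riccatiUpdate_posSemidef_step A M B S N hblk hN P hP, ?_⟩
  have key : ∀ d, d ≤ T → (Pseq (T - d)).PosSemidef := by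
    intro d
    induction d with
    | zero => intro _; simpa [hPT] using hMT
    | succ d ih =>
      intro hd
      have hlt : T - (d + 1) < T := by omega
      have hsucc : T - (d + 1) + 1 = T - d := by omega
      rw [hrec _ hlt, hsucc]
      exact riccatiUpdate_posSemidef_step A M B S N hblk hN _ (ih (by omega))
  intro k hk
  have : T - (T - k) = k := by omega
  simpa [this] using key (T - k) (by omega)
end
end

section
/- Assume Γ ≻ 0 and R ≻ 0. Then the Kalman gain satisfies (Υ + A R C^T)(Γ + C R C^T)^{-1} = Υ Γ^{-1} + (A − Υ Γ^{-1} C)(C^T Γ^{-1} C + R^{-1})^{-1} C^T Γ^{-1}. -/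
open Matrix

noncomputable section

/-- Alternative form of the Kalman gain: for `Γ ≻ 0` and `R ≻ 0`,
`(Υ + A R Cᵀ)(Γ + C R Cᵀ)⁻¹ = Υ Γ⁻¹ + (A − Υ Γ⁻¹ C)(Cᵀ Γ⁻¹ C + R⁻¹)⁻¹ Cᵀ Γ⁻¹`. -/
theorem kalman_gain_alt_form {n p : ℕ}
    (A R : Matrix (Fin n) (Fin n) ℝ) (C : Matrix (Fin p) (Fin n) ℝ)
    (Gam : Matrix (Fin p) (Fin p) ℝ) (Ups : Matrix (Fin n) (Fin p) ℝ)
    (hGam : Gam.PosDef) (hR : R.PosDef) :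
    (Ups + A * R * Cᵀ) * (Gam + C * R * Cᵀ)⁻¹ =
      Ups * Gam⁻¹ +
        (A - Ups * Gam⁻¹ * C) * (Cᵀ * Gam⁻¹ * C + R⁻¹)⁻¹ * (Cᵀ * Gam⁻¹) := by
  have hCT : Cᵀ = (Cᴴ : Matrix (Fin n) (Fin p) ℝ) := by
    ext i j; simp [conjTranspose]
  have hCT' : (Cᵀᵀ : Matrix (Fin p) (Fin n) ℝ) = Cᵀᴴ := by
    ext i j; simp [conjTranspose]
  have hM : (Gam + C * R * Cᵀ).PosDef := by
    rw [hCT]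
    exact hGam.add_posSemidef (hR.posSemidef.mul_mul_conjTranspose_same C)
  have hGi : (Gam⁻¹).PosDef := hGam.inv
  have hS : (Cᵀ * Gam⁻¹ * C + R⁻¹).PosDef := by
    have : (Cᵀ * Gam⁻¹ * Cᵀᴴ).PosSemidef :=
      hGi.posSemidef.mul_mul_conjTranspose_same Cᵀ
    rw [← hCT', transpose_transpose] at this
    exact Matrix.PosDef.posSemidef_add this hR.inv
  have hMu : IsUnit (Gam + C * R * Cᵀ).det := isUnit_iff_ne_zero.mpr hM.det_pos.ne'
  have hSu : IsUnit (Cᵀ * Gam⁻¹ * C + R⁻¹).det := isUnit_iff_ne_zero.mpr hS.det_pos.ne'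
  have hGu : IsUnit Gam.det := isUnit_iff_ne_zero.mpr hGam.det_pos.ne'
  have hRu : IsUnit R.det := isUnit_iff_ne_zero.mpr hR.det_pos.ne'
  have key : Cᵀ * Gam⁻¹ * (Gam + C * R * Cᵀ) =
      (Cᵀ * Gam⁻¹ * C + R⁻¹) * (R * Cᵀ) := by
    simp only [Matrix.mul_add, Matrix.add_mul, Matrix.mul_assoc,
      nonsing_inv_mul Gam hGu, nonsing_inv_mul_cancel_left R Cᵀ hRu,
      Matrix.mul_one]
    exact add_comm _ _
  have key2 : (Cᵀ * Gam⁻¹ * C + R⁻¹)⁻¹ * (Cᵀ * Gam⁻¹) * (Gam + C * R * Cᵀ) =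
      R * Cᵀ := by
    rw [Matrix.mul_assoc, key, ← Matrix.mul_assoc, nonsing_inv_mul _ hSu,
      Matrix.one_mul]
  have main : Ups + A * R * Cᵀ =
      (Ups * Gam⁻¹ +
        (A - Ups * Gam⁻¹ * C) * (Cᵀ * Gam⁻¹ * C + R⁻¹)⁻¹ * (Cᵀ * Gam⁻¹)) *
        (Gam + C * R * Cᵀ) := by
    rw [Matrix.add_mul, Matrix.mul_assoc (A - Ups * Gam⁻¹ * C),
      Matrix.mul_assoc (A - Ups * Gam⁻¹ * C), key2]
    simp only [Matrix.mul_add, Matrix.sub_mul, Matrix.mul_assoc,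
      nonsing_inv_mul_cancel_left Gam _ hGu, Matrix.mul_one,
      mul_nonsing_inv_cancel_left Gam _ hGu]
    rw [nonsing_inv_mul Gam hGu, Matrix.mul_one]
    abel
  rw [main, Matrix.mul_nonsing_inv_cancel_right _ _ hMu]
end
end

section
/- If U_A is an (α, a, ε)-block encoding of A and U_B is an (α, a, ε)-block encoding of B with the same parameters, and V is a unitary on one qubit with V|0⟩ = (|0⟩ + |1⟩)/√2, then W = (V† ⊗ I)(|0⟩⟨0| ⊗ U_A + |1⟩⟨1| ⊗ U_B)(V ⊗ I) is a (2α, a+1, 2ε)-block encoding of A + B. -/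
open Matrix
open scoped Matrix.Norms.L2Operator

noncomputable section

set_option maxRecDepth 10000 in
private lemma aux_VI_unitary (p q : Type*) [Fintype p] [Fintype q] [DecidableEq p]
    [DecidableEq q] (V : Matrix (Fin 2) (Fin 2) ℂ) (hV : V ∈ Matrix.unitaryGroup (Fin 2) ℂ) :
    (Matrix.of fun x y : (Fin 2 × p) × q =>
      V x.1.1 y.1.1 * (if x.1.2 = y.1.2 ∧ x.2 = y.2 then (1:ℂ) else 0))
      ∈ Matrix.unitaryGroup ((Fin 2 × p) × q) ℂ := by
  rw [Matrix.mem_unitaryGroup_iff]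
  have hV' := Matrix.mem_unitaryGroup_iff.mp hV
  have h2 : ∀ xc yc : Fin 2, ∑ x : Fin 2, V xc x * star (V yc x) = (V * star V) xc yc := by
    intro xc yc; simp [Matrix.mul_apply, Matrix.star_apply]
  ext ⟨⟨xc, xp⟩, xq⟩ ⟨⟨yc, yp⟩, yq⟩
  simp only [Matrix.mul_apply, Matrix.star_apply, Matrix.of_apply, Fintype.sum_prod_type,
    star_mul', mul_ite, ite_mul, mul_one, mul_zero, one_mul, zero_mul, star_one,
    star_zero, ite_and, Finset.sum_ite_eq', Finset.mem_univ, if_true, apply_ite,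
    Finset.sum_ite_irrel, Finset.sum_const_zero, Finset.sum_ite_eq]
  by_cases h : xp = yp
  · by_cases h' : xq = yq
    · rw [if_pos h, if_pos h', h2, hV']
      simp [Matrix.one_apply, Prod.ext_iff, h, h']
    · simp [Matrix.one_apply, Prod.ext_iff, h, h']
  · simp [Matrix.one_apply, Prod.ext_iff, h]

set_option maxRecDepth 10000 in
private lemma aux_diag_unitary (p q : Type*) [Fintype p] [Fintype q] [DecidableEq p]
    [DecidableEq q] (UA UB : Matrix (p × q) (p × q) ℂ)
    (hA : UA ∈ Matrix.unitaryGroup (p × q) ℂ) (hB : UB ∈ Matrix.unitaryGroup (p × q) ℂ) :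
    (Matrix.of fun x y : (Fin 2 × p) × q =>
      if x.1.1 = y.1.1 then
        (if x.1.1 = 0 then UA (x.1.2, x.2) (y.1.2, y.2) else UB (x.1.2, x.2) (y.1.2, y.2))
      else 0) ∈ Matrix.unitaryGroup ((Fin 2 × p) × q) ℂ := by
  rw [Matrix.mem_unitaryGroup_iff]
  have hA' := Matrix.mem_unitaryGroup_iff.mp hA
  have hB' := Matrix.mem_unitaryGroup_iff.mp hB
  have kA : ∀ x1 y1 : p, ∀ x2 y2 : q,
      ∑ c : p, ∑ d : q, UA (x1, x2) (c, d) * (starRingEnd ℂ) (UA (y1, y2) (c, d)) =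
      if x1 = y1 ∧ x2 = y2 then 1 else 0 := by
    intro x1 y1 x2 y2
    have : (UA * star UA) (x1, x2) (y1, y2) =
        ∑ c : p, ∑ d : q, UA (x1, x2) (c, d) * (starRingEnd ℂ) (UA (y1, y2) (c, d)) := by
      simp only [Matrix.mul_apply, Fintype.sum_prod_type, Matrix.star_apply, RCLike.star_def]
    rw [← this, hA', Matrix.one_apply]
    simp [Prod.ext_iff]
  have kB : ∀ x1 y1 : p, ∀ x2 y2 : q,
      ∑ c : p, ∑ d : q, UB (x1, x2) (c, d) * (starRingEnd ℂ) (UB (y1, y2) (c, d)) =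
      if x1 = y1 ∧ x2 = y2 then 1 else 0 := by
    intro x1 y1 x2 y2
    have : (UB * star UB) (x1, x2) (y1, y2) =
        ∑ c : p, ∑ d : q, UB (x1, x2) (c, d) * (starRingEnd ℂ) (UB (y1, y2) (c, d)) := by
      simp only [Matrix.mul_apply, Fintype.sum_prod_type, Matrix.star_apply, RCLike.star_def]
    rw [← this, hB', Matrix.one_apply]
    simp [Prod.ext_iff]
  ext ⟨⟨xc, xp⟩, xq⟩ ⟨⟨yc, yp⟩, yq⟩
  fin_cases xc <;> fin_cases yc <;>
    simp [Matrix.mul_apply, Fintype.sum_prod_type, Matrix.star_apply, Fin.sum_univ_two,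
      Matrix.one_apply, Prod.ext_iff, kA, kB]

set_option maxRecDepth 10000 in
private lemma aux_corner (p q : Type*) [Fintype p] [Fintype q] [DecidableEq p] [DecidableEq q]
    (z0 : p) (i j : q) (UA UB : Matrix (p × q) (p × q) ℂ)
    (V : Matrix (Fin 2) (Fin 2) ℂ)
    (hV0 : ∀ c : Fin 2, V c 0 = ((Real.sqrt 2)⁻¹ : ℝ)) :
    ((Matrix.of fun x y : (Fin 2 × p) × q =>
          (starRingEnd ℂ) (V y.1.1 x.1.1) * (if x.1.2 = y.1.2 ∧ x.2 = y.2 then 1 else 0)) *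
        (Matrix.of fun x y : (Fin 2 × p) × q =>
          if x.1.1 = y.1.1 then
            (if x.1.1 = 0 then UA (x.1.2, x.2) (y.1.2, y.2) else UB (x.1.2, x.2) (y.1.2, y.2))
          else 0) *
        (Matrix.of fun x y : (Fin 2 × p) × q =>
          V x.1.1 y.1.1 * (if x.1.2 = y.1.2 ∧ x.2 = y.2 then 1 else 0)))
      ((0, z0), i) ((0, z0), j)
      = (2⁻¹ : ℂ) * UA (z0, i) (z0, j) + (2⁻¹ : ℂ) * UB (z0, i) (z0, j) := by
  simp only [Matrix.mul_apply, Matrix.of_apply, Fintype.sum_prod_type, mul_ite, ite_mul,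
    mul_one, mul_zero, one_mul, zero_mul, ite_and, Finset.sum_ite_irrel, Finset.sum_const_zero,
    Finset.sum_ite_eq, Finset.sum_ite_eq', Finset.mem_univ, if_true, hV0, Fin.sum_univ_two]
  norm_num [Complex.ofReal_inv]
  have h2 : ((Real.sqrt 2 : ℝ) : ℂ) * ((Real.sqrt 2 : ℝ) : ℂ) = 2 := by
    rw [← Complex.ofReal_mul, Real.mul_self_sqrt (by norm_num)]; norm_num
  field_simp
  ring_nf
  rw [sq, h2]

/-- LCU addition: if `U_A, U_B` are `(α, a, ε)`-block encodings of `A, B` and `V` is a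
single-qubit unitary with `V|0⟩ = (|0⟩ + |1⟩)/√2`, then
`W = (V† ⊗ I)(|0⟩⟨0| ⊗ U_A + |1⟩⟨1| ⊗ U_B)(V ⊗ I)` is a `(2α, a + 1, 2ε)`-block encoding
of `A + B`. -/
theorem blockEncoding_lcu_add (s a : ℕ) (α ε : ℝ) (hα : 0 < α)
    (A B : Matrix (Fin s → Fin 2) (Fin s → Fin 2) ℂ)
    (UA UB : Matrix ((Fin a → Fin 2) × (Fin s → Fin 2)) ((Fin a → Fin 2) × (Fin s → Fin 2)) ℂ)
    (hA : IsBlockEncoding (fun _ => 0) α ε UA A)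
    (hB : IsBlockEncoding (fun _ => 0) α ε UB B)
    (V : Matrix (Fin 2) (Fin 2) ℂ) (hV : V ∈ Matrix.unitaryGroup (Fin 2) ℂ)
    (hV0 : ∀ c : Fin 2, V c 0 = ((Real.sqrt 2)⁻¹ : ℝ)) :
    IsBlockEncoding (ι := Fin 2 × (Fin a → Fin 2)) (κ := Fin s → Fin 2)
      (0, fun _ => 0) (2 * α) (2 * ε)
      ((Matrix.of fun x y : (Fin 2 × (Fin a → Fin 2)) × (Fin s → Fin 2) =>
          (starRingEnd ℂ) (V y.1.1 x.1.1) * (if x.1.2 = y.1.2 ∧ x.2 = y.2 then 1 else 0)) *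
        (Matrix.of fun x y : (Fin 2 × (Fin a → Fin 2)) × (Fin s → Fin 2) =>
          if x.1.1 = y.1.1 then
            (if x.1.1 = 0 then UA (x.1.2, x.2) (y.1.2, y.2) else UB (x.1.2, x.2) (y.1.2, y.2))
          else 0) *
        (Matrix.of fun x y : (Fin 2 × (Fin a → Fin 2)) × (Fin s → Fin 2) =>
          V x.1.1 y.1.1 * (if x.1.2 = y.1.2 ∧ x.2 = y.2 then 1 else 0)))
      (A + B) := by
  obtain ⟨hUA, hAn⟩ := hA
  obtain ⟨hUB, hBn⟩ := hB
  constructor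
  · -- unitarity
    have h3 := aux_VI_unitary (Fin a → Fin 2) (Fin s → Fin 2) V hV
    have h2 := aux_diag_unitary (Fin a → Fin 2) (Fin s → Fin 2) UA UB hUA hUB
    have h1 : (Matrix.of fun x y : (Fin 2 × (Fin a → Fin 2)) × (Fin s → Fin 2) =>
          (starRingEnd ℂ) (V y.1.1 x.1.1) * (if x.1.2 = y.1.2 ∧ x.2 = y.2 then (1:ℂ) else 0)) =
        star (Matrix.of fun x y : (Fin 2 × (Fin a → Fin 2)) × (Fin s → Fin 2) =>
          V x.1.1 y.1.1 * (if x.1.2 = y.1.2 ∧ x.2 = y.2 then (1:ℂ) else 0)) := by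
      have hcond : ∀ x y : (Fin 2 × (Fin a → Fin 2)) × (Fin s → Fin 2),
          (y.1.2 = x.1.2 ∧ y.2 = x.2) ↔ (x.1.2 = y.1.2 ∧ x.2 = y.2) := by
        intro x y; constructor <;> rintro ⟨h1, h2⟩ <;> exact ⟨h1.symm, h2.symm⟩
      ext x y
      by_cases h : x.1.2 = y.1.2 ∧ x.2 = y.2
      · simp only [Matrix.of_apply, Matrix.star_apply, if_pos h, if_pos ((hcond x y).mpr h),
          mul_one]
        simp [RCLike.star_def]
      · simp only [Matrix.of_apply, Matrix.star_apply, if_neg h,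
          if_neg (fun hc => h ((hcond x y).mp hc)), mul_zero]
        simp
    rw [h1]
    exact mul_mem (mul_mem (Unitary.star_mem h3) h2) h3
  · -- norm bound
    have hW := fun i j => aux_corner (Fin a → Fin 2) (Fin s → Fin 2) (fun _ => 0) i j UA UB V hV0
    have key : A + B - (2 * α) • Matrix.of (fun i j =>
          ((Matrix.of fun x y : (Fin 2 × (Fin a → Fin 2)) × (Fin s → Fin 2) =>
              (starRingEnd ℂ) (V y.1.1 x.1.1) * (if x.1.2 = y.1.2 ∧ x.2 = y.2 then 1 else 0)) *
            (Matrix.of fun x y : (Fin 2 × (Fin a → Fin 2)) × (Fin s → Fin 2) =>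
              if x.1.1 = y.1.1 then
                (if x.1.1 = 0 then UA (x.1.2, x.2) (y.1.2, y.2) else UB (x.1.2, x.2) (y.1.2, y.2))
              else 0) *
            (Matrix.of fun x y : (Fin 2 × (Fin a → Fin 2)) × (Fin s → Fin 2) =>
              V x.1.1 y.1.1 * (if x.1.2 = y.1.2 ∧ x.2 = y.2 then 1 else 0)))
          ((0, fun _ => 0), i) ((0, fun _ => 0), j))
        = (A - α • Matrix.of (fun i j => UA ((fun _ => 0), i) ((fun _ => 0), j)))
          + (B - α • Matrix.of (fun i j => UB ((fun _ => 0), i) ((fun _ => 0), j))) := by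
      ext i j
      simp only [Matrix.sub_apply, Matrix.add_apply, Matrix.smul_apply, Matrix.of_apply,
        hW i j, Complex.real_smul, Complex.ofReal_mul]
      push_cast
      ring
    rw [key]
    calc ‖_ + _‖ ≤ ‖A - α • Matrix.of (fun i j => UA ((fun _ => 0), i) ((fun _ => 0), j))‖
          + ‖B - α • Matrix.of (fun i j => UB ((fun _ => 0), i) ((fun _ => 0), j))‖ :=
        norm_add_le _ _
      _ ≤ 2 * ε := by linarith

end
end

section
/- For symmetric positive semidefinite P and positive definite N, the matrix A^T P A − A^T P B (N + B^T P B)^{-1} B^T P A is positive semidefinite. -/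
open Matrix

noncomputable section

/-- For symmetric positive semidefinite `P` and positive definite `N`, the matrix
`Aᵀ P A − Aᵀ P B (N + Bᵀ P B)⁻¹ Bᵀ P A` is positive semidefinite. -/
theorem riccati_quadratic_term_posSemidef {n m : ℕ}
    (A P : Matrix (Fin n) (Fin n) ℝ) (B : Matrix (Fin n) (Fin m) ℝ)
    (N : Matrix (Fin m) (Fin m) ℝ)
    (hP : P.PosSemidef) (hN : N.PosDef) :
    (Aᵀ * P * A - Aᵀ * P * B * (N + Bᵀ * P * B)⁻¹ * (Bᵀ * P * A)).PosSemidef := by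
  have ct : ∀ {a b : Type} (X : Matrix a b ℝ), Xᴴ = Xᵀ := fun X => by
    ext i j; simp [conjTranspose]
  have hPt : Pᵀ = P := hP.isHermitian
  have hBPB : (Bᵀ * P * B).PosSemidef := by
    have := hP.conjTranspose_mul_mul_same B
    simpa [ct, hPt] using this
  have hS : (N + Bᵀ * P * B).PosDef := hN.add_posSemidef hBPB
  haveI : Invertible (N + Bᵀ * P * B) := hS.isUnit.invertible
  have key : (fromBlocks (N + Bᵀ * P * B) (Bᵀ * P * A) (Bᵀ * P * A)ᴴ
      (Aᵀ * P * A)).PosSemidef := by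
    have h1 : (fromBlocks (N + Bᵀ * P * B) (Bᵀ * P * A) (Bᵀ * P * A)ᴴ (Aᵀ * P * A))
        = fromBlocks N 0 0 0 + (fromCols B A)ᴴ * P * fromCols B A := by
      rw [show (fromCols B A)ᴴ = fromRows Bᴴ Aᴴ from
        conjTranspose_fromCols_eq_fromRows_conjTranspose B A]
      rw [fromRows_mul, fromRows_mul_fromCols, fromBlocks_add]
      congr 1 <;> simp [ct, hPt, Matrix.mul_assoc, Matrix.transpose_mul]
    rw [h1]
    refine Matrix.PosSemidef.add ?_ (hP.conjTranspose_mul_mul_same _)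
    refine Matrix.PosSemidef.of_dotProduct_mulVec_nonneg ?_ ?_
    · show _ = _
      rw [fromBlocks_conjTranspose]
      simp only [conjTranspose_zero]
      rw [ct, show Nᵀ = N from ct N ▸ hN.1.eq]
    · intro x
      have := hN.posSemidef.dotProduct_mulVec_nonneg (x ∘ Sum.inl)
      simpa [fromBlocks_mulVec, dotProduct, Fintype.sum_sum_type, mulVec] using this
  have := (Matrix.PosDef.fromBlocks₁₁ (Bᵀ * P * A) (Aᵀ * P * A) hS).mp key
  have heq : (Bᵀ * P * A)ᴴ = Aᵀ * P * B := by
    simp [ct, hPt, Matrix.transpose_mul, Matrix.mul_assoc]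
  rw [heq] at this
  simpa [Matrix.mul_assoc, Matrix.mul_sub, Matrix.sub_mul] using this
end
end
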